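/- arXiv:1611.07869 — 2 statements merged into one kernel-verified Lean document; each statement's English description precedes it below -/
import Mathlib

section
/- Let λ₁ and λ₂ be partitions such that λ₂(i+1) ≤ λ₁(i) ≤ λ₂(i) for every i ≥ 1. Fix a positive integer p. Suppose b is the least index with λ₁(b) = p, and let c be the least index with λ₂(c) ≤ p. Then λ₁(d) ≤ λ₂(c) for every d > b. -/
/-- Lemma "sandwich implies".
A partition is a weakly decreasing function `λ : ℕ → ℕ` (1-based rows) with finite
support.  Suppose `λ₂(i+1) ≤ λ₁(i) ≤ λ₂(i)` for every `i ≥ 1`.  Fix `p > 0`.  If `b` is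
the least index with `λ₁(b) = p` and `c` is the least index with `λ₂(c) ≤ p`, then
`λ₁(d) ≤ λ₂(c)` for every `d > b`. -/
theorem sandwich_implies (lam1 lam2 : ℕ → ℕ)
    (h1mono : ∀ i j, 1 ≤ i → i ≤ j → lam1 j ≤ lam1 i)
    (h2mono : ∀ i j, 1 ≤ i → i ≤ j → lam2 j ≤ lam2 i)
    (h1fin : ∃ N, ∀ i, N ≤ i → lam1 i = 0)
    (h2fin : ∃ N, ∀ i, N ≤ i → lam2 i = 0)
    (hsand : ∀ i, 1 ≤ i → lam2 (i + 1) ≤ lam1 i ∧ lam1 i ≤ lam2 i)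
    (p : ℕ) (hp : 0 < p)
    (b : ℕ) (hb1 : 1 ≤ b) (hbp : lam1 b = p)
    (hbmin : ∀ b', 1 ≤ b' → lam1 b' = p → b ≤ b')
    (c : ℕ) (hc1 : 1 ≤ c) (hcp : lam2 c ≤ p)
    (hcmin : ∀ c', 1 ≤ c' → lam2 c' ≤ p → c ≤ c') :
    ∀ d, b < d → lam1 d ≤ lam2 c := by
  intro d hd
  have h2b : lam2 (b + 1) ≤ p := hbp ▸ (hsand b hb1).1
  have hcb : c ≤ b + 1 := hcmin (b + 1) (by omega) h2b
  calc lam1 d ≤ lam1 (b + 1) := h1mono (b + 1) d (by omega) (by omega)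
    _ ≤ lam2 (b + 1) := (hsand (b + 1) (by omega)).2
    _ ≤ lam2 c := h2mono c (b + 1) hc1 hcb
end

section
/- Let α be a cascading n-sequence, let I = I_k = (a, a+1, ..., m) be a lower subinterval of α, and let R_I = R_{k-1} = (μ₁, ..., μ_n) be the rigged configuration corresponding to the portion of α preceding I. Then every string of each of μ₁, ..., μ_{m-1} has rigging 0, and for every l in {1, ..., m-1} the underlying partitions satisfy overline(μ_{l+1}) ⊆ μ_l ⊆ μ_{l+1}, where overline(λ) denotes λ with its top (longest) row removed and ⊆ is containment of Young diagrams. -/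
namespace CascRC

abbrev RP := Multiset (ℕ × ℤ)
abbrev RC := ℕ → RP

/-- The Cartan matrix of type `A`. -/
def cartanA (a b : ℕ) : ℤ :=
  if a = b then 2 else if b = a + 1 ∨ a = b + 1 then -1 else 0

/-- The smallest rigging of a rigged partition (0 if empty). -/
noncomputable def minRig (ν : RP) : ℤ :=
  if h : ν = 0 then 0
  else (ν.map Prod.snd).toFinset.min'
    (Multiset.toFinset_nonempty.mpr (by simpa [Multiset.map_eq_zero] using h))

/-- The greatest length of a string whose rigging is the smallest rigging. -/
noncomputable def selLen (ν : RP) : ℕ :=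
  ((ν.filter (fun s => s.2 = minRig ν)).map Prod.fst).sup

/-- The Kashiwara operator `f_a` on rigged configurations. -/
noncomputable def fOp (a : ℕ) (R : RC) : RC :=
  if R a = 0 ∨ 0 < minRig (R a) then
    fun b => (if b = a then ({(1, -1)} : RP) else 0)
      + (R b).map (fun s => if 0 < s.1 then (s.1, s.2 - cartanA a b) else s)
  else
    fun b =>
      (if b = a then ({(selLen (R a) + 1, minRig (R a) - 1)} : RP) else 0)
      + ((if b = a then (R a).erase (selLen (R a), minRig (R a)) else R b).map
          (fun s => if selLen (R a) < s.1 then (s.1, s.2 - cartanA a b) else s))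

/-- A list `γ` acts by `f_γ = f_{γ_p} ∘ ⋯ ∘ f_{γ₁}`. -/
noncomputable def fList (γ : List ℕ) (R : RC) : RC :=
  γ.foldl (fun S a => fOp a S) R

def emptyRC : RC := fun _ => 0

/-- `RC(α)`: the result of the list `α` acting on the empty rigged configuration. -/
noncomputable def RCseq (α : List ℕ) : RC := fList α emptyRC

/-- The `m`-lower subinterval `(a, a+1, …, m)`. -/
def lowerInt (a m : ℕ) : List ℕ := List.range' a (m + 1 - a)

def IsLowerIv (n : ℕ) (p : ℕ × ℕ) : Prop := 1 ≤ p.1 ∧ p.1 ≤ p.2 ∧ p.2 ≤ n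

/-- Ordering between consecutive lower subintervals in a cascading sequence. -/
def CascCh (p q : ℕ × ℕ) : Prop := q.2 < p.2 ∨ (q.2 = p.2 ∧ p.1 ≤ q.1)

/-- `ivs` is the lower-subinterval decomposition of a cascading `n`-sequence. -/
def IsCascDecomp (n : ℕ) (ivs : List (ℕ × ℕ)) : Prop :=
  (∀ p ∈ ivs, IsLowerIv n p) ∧ ivs.Chain' CascCh

/-- The integer sequence determined by a decomposition into lower subintervals. -/
def seqOf (ivs : List (ℕ × ℕ)) : List ℕ :=
  (ivs.map (fun p => lowerInt p.1 p.2)).flatten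

/-- `R_k`: the rigged configuration corresponding to `I_1 ⋯ I_k`. -/
noncomputable def Rk (ivs : List (ℕ × ℕ)) (k : ℕ) : RC :=
  RCseq (seqOf (ivs.take k))

/-- Height of column `c` of (the underlying partition of) a rigged partition. -/
def colHt (ν : RP) (c : ℕ) : ℕ := (ν.filter (fun s => c ≤ s.1)).card

/-- Length of the `i`-th row (1-based) of the underlying partition. -/
def rowLen (ν : RP) (i : ℕ) : ℕ :=
  ((Finset.Icc 1 ((ν.map Prod.fst).sup)).filter (fun c => i ≤ colHt ν c)).card

/-- Length of the uppermost row of length at most `L` (0 for the virtual empty row). -/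
def upRowLen (ν : RP) (L : ℕ) : ℕ := rowLen ν (colHt ν (L + 1) + 1)

/-- The column to which an application of `f_a` adds a box. -/
noncomputable def selCol (a : ℕ) (R : RC) : ℕ :=
  if R a = 0 ∨ 0 < minRig (R a) then 1 else selLen (R a) + 1

/-- Given a lower subinterval `p = (a, m)` acting on `R`, the column to which the
operator `f_l` occurring in it adds a box in the `l`-th partition. -/
noncomputable def ivCol (p : ℕ × ℕ) (l : ℕ) (R : RC) : ℕ :=
  selCol l (fList (lowerInt p.1 (l - 1)) R)

/-- Lengths `|r_a|, |r_{a+1}|, …` of the rows `r_i` of Lemma "snake":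
`rLenSeq R a (i - a) = |r_i|`. -/
def rLenSeq (R : RC) (a : ℕ) : ℕ → ℕ
  | 0 => rowLen (R a) 1
  | k + 1 => upRowLen (R (a + k + 1)) (rLenSeq R a k)


/-! ### basic lemmas -/

lemma sup_mem_of_ne_zero {s : Multiset ℕ} (h : s ≠ 0) : s.sup ∈ s := by
  induction s using Multiset.induction_on with
  | empty => exact absurd rfl h
  | cons a t ih =>
    rcases eq_or_ne t 0 with rfl | ht
    · simp
    · rw [Multiset.sup_cons]
      rcases le_total a t.sup with h1 | h1
      · rw [sup_eq_right.mpr h1]; exact Multiset.mem_cons_of_mem (ih ht)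
      · rw [sup_eq_left.mpr h1]; exact Multiset.mem_cons_self _ _

lemma minRig_le {ν : RP} (h : ν ≠ 0) {s : ℕ × ℤ} (hs : s ∈ ν) : minRig ν ≤ s.2 := by
  rw [minRig, dif_neg h]
  exact Finset.min'_le _ _ (by simp [Multiset.mem_toFinset]; exact ⟨s.1, (by simpa using hs)⟩)

lemma exists_minRig {ν : RP} (h : ν ≠ 0) : ∃ s ∈ ν, s.2 = minRig ν := by
  have : minRig ν ∈ (ν.map Prod.snd).toFinset := by
    rw [minRig, dif_neg h]; exact Finset.min'_mem _ _
  rw [Multiset.mem_toFinset, Multiset.mem_map] at this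
  obtain ⟨s, hs, h2⟩ := this
  exact ⟨s, hs, h2⟩

lemma minRig_eq {ν : RP} {s : ℕ × ℤ} (hs : s ∈ ν) (hall : ∀ t ∈ ν, s.2 ≤ t.2) :
    minRig ν = s.2 := by
  have hne : ν ≠ 0 := fun h => by simp [h] at hs
  refine le_antisymm (minRig_le hne hs) ?_
  obtain ⟨t, ht, h2⟩ := exists_minRig hne
  rw [← h2]; exact hall t ht

lemma selLen_eq {ν : RP} {L : ℕ} {x : ℤ} (hmin : minRig ν = x) (hs : (L, x) ∈ ν)
    (hall : ∀ t ∈ ν, t.2 = x → t.1 ≤ L) : selLen ν = L := by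
  rw [selLen]
  refine le_antisymm (Multiset.sup_le.mpr ?_) (Multiset.le_sup ?_)
  · intro b hb
    rw [Multiset.mem_map] at hb
    obtain ⟨t, ht, rfl⟩ := hb
    rw [Multiset.mem_filter] at ht
    exact hall t ht.1 (by rw [ht.2, hmin])
  · rw [Multiset.mem_map]
    exact ⟨(L, x), by rw [Multiset.mem_filter]; exact ⟨hs, by simp [hmin]⟩, rfl⟩

/-! ### shiftGT -/

def shiftGT (t : ℕ) (d : ℤ) (ν : RP) : RP :=
  ν.map (fun s => if t < s.1 then (s.1, s.2 + d) else s)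

lemma shiftGT_zero (t : ℕ) (ν : RP) : shiftGT t 0 ν = ν := by
  have h : (fun s : ℕ × ℤ => if t < s.1 then (s.1, s.2 + 0) else s) = id := by
    funext s; split <;> simp
  rw [shiftGT, h, Multiset.map_id]

lemma shiftGT_of_forall_le {t : ℕ} {d : ℤ} {ν : RP} (h : ∀ s ∈ ν, s.1 ≤ t) :
    shiftGT t d ν = ν := by
  rw [shiftGT, Multiset.map_congr rfl (fun s hs => if_neg (by simpa using h s hs))]
  exact Multiset.map_id ν

lemma mem_shiftGT_of_le {t : ℕ} {d : ℤ} {ν : RP} {s : ℕ × ℤ} (hs : s ∈ ν) (h : s.1 ≤ t) :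
    s ∈ shiftGT t d ν := by
  rw [shiftGT, Multiset.mem_map]
  exact ⟨s, hs, if_neg (by omega)⟩

lemma mem_shiftGT_of_lt {t : ℕ} {d : ℤ} {ν : RP} {s : ℕ × ℤ} (hs : s ∈ ν) (h : t < s.1) :
    (s.1, s.2 + d) ∈ shiftGT t d ν := by
  rw [shiftGT, Multiset.mem_map]
  exact ⟨s, hs, if_pos h⟩

lemma mem_shiftGT {t : ℕ} {d : ℤ} {ν : RP} {s : ℕ × ℤ} (hs : s ∈ shiftGT t d ν) :
    ∃ u ∈ ν, (u.1 ≤ t ∧ s = u) ∨ (t < u.1 ∧ s = (u.1, u.2 + d)) := by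
  rw [shiftGT, Multiset.mem_map] at hs
  obtain ⟨u, hu, h⟩ := hs
  refine ⟨u, hu, ?_⟩
  by_cases hc : t < u.1
  · right; exact ⟨hc, by rw [← h, if_pos hc]⟩
  · left; exact ⟨by omega, by rw [← h, if_neg hc]⟩

/-! ### colHt lemmas -/

lemma colHt_zero (c : ℕ) : colHt 0 c = 0 := rfl

lemma colHt_cons (s : ℕ × ℤ) (ν : RP) (c : ℕ) :
    colHt (s ::ₘ ν) c = colHt ν c + (if c ≤ s.1 then 1 else 0) := by
  rw [colHt, colHt, Multiset.filter_cons]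
  split
  · rw [Multiset.card_add]; simp [add_comm]
  · simp

lemma colHt_add (ν₁ ν₂ : RP) (c : ℕ) : colHt (ν₁ + ν₂) c = colHt ν₁ c + colHt ν₂ c := by
  rw [colHt, colHt, colHt, Multiset.filter_add, Multiset.card_add]

lemma colHt_shiftGT (t : ℕ) (d : ℤ) (ν : RP) (c : ℕ) : colHt (shiftGT t d ν) c = colHt ν c := by
  rw [colHt, shiftGT, Multiset.filter_map, Multiset.card_map, colHt]
  congr 1
  apply Multiset.filter_congr
  intro s _
  simp only [Function.comp]
  constructor <;> intro h
  · split at h <;> simpa using h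
  · split <;> simpa using h
lemma colHt_anti {ν : RP} {c c' : ℕ} (h : c ≤ c') : colHt ν c' ≤ colHt ν c := by
  rw [colHt, colHt]
  apply Multiset.card_le_card
  apply Multiset.monotone_filter_right
  intro s hs; omega

lemma colHt_eq_zero_iff {ν : RP} {c : ℕ} : colHt ν c = 0 ↔ ∀ s ∈ ν, s.1 < c := by
  rw [colHt, Multiset.card_eq_zero, Multiset.filter_eq_nil]
  constructor <;> intro h s hs <;> have := h s hs
  · simp at this; omega
  · simpa using Nat.not_le.mpr this

lemma one_le_colHt {ν : RP} {s : ℕ × ℤ} (hs : s ∈ ν) {c : ℕ} (h : c ≤ s.1) :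
    1 ≤ colHt ν c := by
  rw [colHt]
  have : s ∈ Multiset.filter (fun s => c ≤ s.1) ν := Multiset.mem_filter.mpr ⟨hs, by simpa using h⟩
  exact Multiset.card_pos_iff_exists_mem.mpr ⟨s, this⟩

lemma colHt_erase {ν : RP} {s : ℕ × ℤ} (hs : s ∈ ν) (c : ℕ) :
    colHt ν c = colHt (ν.erase s) c + (if c ≤ s.1 then 1 else 0) := by
  conv_lhs => rw [← Multiset.cons_erase hs]
  rw [colHt_cons]

lemma colHt_lt_of_mem {ν : RP} {s : ℕ × ℤ} (hs : s ∈ ν) :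
    colHt ν (s.1 + 1) + 1 ≤ colHt ν s.1 := by
  rw [colHt_erase hs s.1, colHt_erase hs (s.1 + 1), if_pos le_rfl, if_neg (by omega)]
  have : colHt (ν.erase s) (s.1 + 1) ≤ colHt (ν.erase s) s.1 := colHt_anti (by omega)
  omega


/-! ### maxLen and upLen -/

def maxLen (ν : RP) : ℕ := (ν.map Prod.fst).sup

def upLen (ν : RP) (r : ℕ) : ℕ := ((ν.filter (fun s => s.1 ≤ r)).map Prod.fst).sup

lemma le_maxLen {ν : RP} {s : ℕ × ℤ} (hs : s ∈ ν) : s.1 ≤ maxLen ν :=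
  Multiset.le_sup (Multiset.mem_map_of_mem _ hs)

lemma exists_maxLen {ν : RP} (h : ν ≠ 0) : ∃ x, (maxLen ν, x) ∈ ν := by
  have : maxLen ν ∈ ν.map Prod.fst := sup_mem_of_ne_zero (by simpa [Multiset.map_eq_zero])
  rw [Multiset.mem_map] at this
  obtain ⟨s, hs, h2⟩ := this
  exact ⟨s.2, by rwa [← h2, Prod.mk.eta]⟩

lemma upLen_le_r (ν : RP) (r : ℕ) : upLen ν r ≤ r := by
  apply Multiset.sup_le.mpr
  intro b hb
  rw [Multiset.mem_map] at hb
  obtain ⟨s, hs, rfl⟩ := hb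
  exact (Multiset.mem_filter.mp hs).2

lemma le_upLen {ν : RP} {r : ℕ} {s : ℕ × ℤ} (hs : s ∈ ν) (h : s.1 ≤ r) : s.1 ≤ upLen ν r :=
  Multiset.le_sup (Multiset.mem_map_of_mem _ (Multiset.mem_filter.mpr ⟨hs, h⟩))

lemma exists_upLen {ν : RP} {r : ℕ} (h : ∃ s ∈ ν, s.1 ≤ r) : ∃ x, (upLen ν r, x) ∈ ν := by
  obtain ⟨s, hs, hsr⟩ := h
  have hmem : s ∈ ν.filter (fun s => s.1 ≤ r) := Multiset.mem_filter.mpr ⟨hs, hsr⟩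
  have hne : (ν.filter (fun s => s.1 ≤ r)).map Prod.fst ≠ 0 := by
    simp only [ne_eq, Multiset.map_eq_zero]
    intro hc
    rw [hc] at hmem
    exact absurd hmem (Multiset.notMem_zero s)
  have : upLen ν r ∈ (ν.filter (fun s => s.1 ≤ r)).map Prod.fst := sup_mem_of_ne_zero hne
  rw [Multiset.mem_map] at this
  obtain ⟨t, ht, h2⟩ := this
  exact ⟨t.2, by rw [← h2, Prod.mk.eta]; exact (Multiset.mem_filter.mp ht).1⟩

lemma upLen_eq_zero {ν : RP} {r : ℕ} (h : ¬ ∃ s ∈ ν, s.1 ≤ r) : upLen ν r = 0 := by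
  have : ν.filter (fun s => s.1 ≤ r) = 0 := by
    rw [Multiset.filter_eq_nil]
    intro s hs hc
    exact h ⟨s, hs, hc⟩
  rw [upLen, this]
  simp

lemma upLen_maxLen {ν : RP} (h : ν ≠ 0) : upLen ν (maxLen ν) = maxLen ν := by
  obtain ⟨x, hx⟩ := exists_maxLen h
  exact le_antisymm (upLen_le_r _ _) (le_upLen hx le_rfl)

lemma colHt_maxLen_succ (ν : RP) : colHt ν (maxLen ν + 1) = 0 :=
  colHt_eq_zero_iff.mpr (fun s hs => Nat.lt_succ_of_le (le_maxLen hs))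

lemma colHt_gap {ν : RP} {r c : ℕ} (h1 : upLen ν r < c) (h2 : c ≤ r + 1) :
    colHt ν c = colHt ν (r + 1) := by
  rw [colHt, colHt]
  congr 1
  apply Multiset.filter_congr
  intro s hs
  constructor
  · intro h
    by_contra hc
    have hsr : s.1 ≤ r := by omega
    have := le_upLen hs hsr
    omega
  · intro h; omega

/-! ### cartanA and fOp rewriting -/

lemma neg_cartan_self (a : ℕ) : -(cartanA a a) = -2 := by simp [cartanA]

lemma neg_cartan_adj {a b : ℕ} (h : b = a + 1 ∨ a = b + 1) : -(cartanA a b) = 1 := by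
  have hne : a ≠ b := by omega
  rw [cartanA, if_neg hne, if_pos h]; norm_num

lemma neg_cartan_far {a b : ℕ} (h : b + 1 < a ∨ a + 1 < b) : -(cartanA a b) = 0 := by
  rw [cartanA, if_neg (by omega), if_neg (by omega)]; norm_num

noncomputable def selOf (a : ℕ) (R : RC) : ℕ :=
  if R a = 0 ∨ 0 < minRig (R a) then 0 else selLen (R a)

lemma map_eq_shiftGT (t : ℕ) (d : ℤ) (ν : RP) :
    ν.map (fun s => if t < s.1 then (s.1, s.2 - (-d)) else s) = shiftGT t d ν :=
  Multiset.map_congr rfl (fun s _ => by split <;> simp [sub_eq_add_neg])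

lemma fOp_b1 {a : ℕ} {R : RC} (h : R a = 0 ∨ 0 < minRig (R a)) (b : ℕ) :
    fOp a R b = (if b = a then ({(1, -1)} : RP) else 0) + shiftGT 0 (-(cartanA a b)) (R b) := by
  have h1 : fOp a R b = (if b = a then ({(1, -1)} : RP) else 0)
      + (R b).map (fun s => if 0 < s.1 then (s.1, s.2 - cartanA a b) else s) := by
    rw [fOp, if_pos h]
  rw [h1]
  congr 1

lemma fOp_b2 {a : ℕ} {R : RC} (h : ¬(R a = 0 ∨ 0 < minRig (R a))) (b : ℕ) :
    fOp a R b = (if b = a then ({(selLen (R a) + 1, minRig (R a) - 1)} : RP) else 0)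
      + shiftGT (selLen (R a)) (-(cartanA a b))
        (if b = a then (R a).erase (selLen (R a), minRig (R a)) else R b) := by
  have h1 : fOp a R b = (if b = a then ({(selLen (R a) + 1, minRig (R a) - 1)} : RP) else 0)
      + ((if b = a then (R a).erase (selLen (R a), minRig (R a)) else R b).map
          (fun s => if selLen (R a) < s.1 then (s.1, s.2 - cartanA a b) else s)) := by
    rw [fOp, if_neg h]
  rw [h1]
  congr 1

lemma fOp_far {a b : ℕ} (R : RC) (h : b + 1 < a ∨ a + 1 < b) : fOp a R b = R b := by
  have hba : b ≠ a := by omega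
  by_cases hb : R a = 0 ∨ 0 < minRig (R a)
  · rw [fOp_b1 hb, if_neg hba, neg_cartan_far h, shiftGT_zero, zero_add]
  · rw [fOp_b2 hb, if_neg hba, if_neg hba, neg_cartan_far h, shiftGT_zero, zero_add]

lemma fOp_adj {a b : ℕ} (R : RC) (h : b = a + 1 ∨ a = b + 1) :
    fOp a R b = shiftGT (selOf a R) 1 (R b) := by
  have hba : b ≠ a := by omega
  by_cases hb : R a = 0 ∨ 0 < minRig (R a)
  · rw [fOp_b1 hb, if_neg hba, neg_cartan_adj h, zero_add, selOf, if_pos hb]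
  · rw [fOp_b2 hb, if_neg hba, if_neg hba, neg_cartan_adj h, zero_add, selOf, if_neg hb]

lemma fOp_self_b1 {a : ℕ} {R : RC} (h : R a = 0 ∨ 0 < minRig (R a)) :
    fOp a R a = (1, -1) ::ₘ shiftGT 0 (-2) (R a) := by
  rw [fOp_b1 h, if_pos rfl, neg_cartan_self, ← Multiset.singleton_add]

lemma fOp_self_b2 {a : ℕ} {R : RC} (h : ¬(R a = 0 ∨ 0 < minRig (R a))) :
    fOp a R a = (selLen (R a) + 1, minRig (R a) - 1) ::ₘ
      shiftGT (selLen (R a)) (-2) ((R a).erase (selLen (R a), minRig (R a))) := by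
  rw [fOp_b2 h, if_pos rfl, if_pos rfl, neg_cartan_self, ← Multiset.singleton_add]

/-! ### selection on 0/1 patterned partitions -/

lemma sel_pattern_pos {ν : RP} {w : ℕ} (hpos : ∀ s ∈ ν, 1 ≤ s.1)
    (hpat : ∀ s ∈ ν, (s.1 ≤ w ∧ s.2 = 0) ∨ (w < s.1 ∧ s.2 = 1))
    (hex : ∃ s ∈ ν, s.1 ≤ w) :
    ¬(ν = 0 ∨ 0 < minRig ν) ∧ minRig ν = 0 ∧ selLen ν = upLen ν w ∧
      (upLen ν w, (0:ℤ)) ∈ ν ∧ 1 ≤ upLen ν w := by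
  obtain ⟨s₀, hs₀, hs₀w⟩ := hex
  have hne : ν ≠ 0 := fun h => by simp [h] at hs₀
  obtain ⟨x, hx⟩ := exists_upLen ⟨s₀, hs₀, hs₀w⟩
  have hule : upLen ν w ≤ w := upLen_le_r ν w
  have hxu : x = 0 := by
    rcases hpat _ hx with h | h
    · exact h.2
    · exact absurd hule (by simp at h; omega)
  rw [hxu] at hx
  have hmin : minRig ν = 0 := by
    refine minRig_eq hx ?_
    intro t ht
    rcases hpat t ht with h | h <;> simp [h.2]
  have hsel : selLen ν = upLen ν w := by
    refine selLen_eq hmin hx ?_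
    intro t ht ht2
    rcases hpat t ht with h | h
    · exact le_upLen ht h.1
    · rw [h.2] at ht2; norm_num at ht2
  have hposu : 1 ≤ upLen ν w := le_trans (hpos s₀ hs₀) (le_upLen hs₀ hs₀w)
  refine ⟨?_, hmin, hsel, hx, hposu⟩
  push_neg
  exact ⟨hne, hmin.le⟩

lemma sel_pattern_neg {ν : RP} {w : ℕ}
    (hpat : ∀ s ∈ ν, (s.1 ≤ w ∧ s.2 = 0) ∨ (w < s.1 ∧ s.2 = 1))
    (hnex : ¬ ∃ s ∈ ν, s.1 ≤ w) :
    (ν = 0 ∨ 0 < minRig ν) ∧ upLen ν w = 0 := by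
  refine ⟨?_, upLen_eq_zero hnex⟩
  rcases eq_or_ne ν 0 with h | h
  · exact Or.inl h
  · right
    obtain ⟨s, hs, hmin⟩ := exists_minRig h
    rw [← hmin]
    rcases hpat s hs with h' | h'
    · exact absurd ⟨s, hs, h'.1⟩ hnex
    · rw [h'.2]; norm_num

/-! ### the invariant at the top level -/

def INVT (ρ : ℕ) (ν : RP) : Prop :=
  (∀ s ∈ ν, s.2 ≤ 0) ∧
  (∀ s ∈ ν, ∀ t ∈ ν, t.1 < s.1 → s.2 ≤ t.2) ∧
  ∃ z : ℤ, (∀ s ∈ ν, ρ < s.1 → s.2 = z) ∧ ((∃ s ∈ ν, s.1 ≤ ρ ∧ s.2 ≤ z) ∨ z = 0)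

lemma INVT_of_rig_zero {ρ : ℕ} {ν : RP} (h : ∀ s ∈ ν, s.2 = 0) : INVT ρ ν :=
  ⟨fun s hs => (h s hs).le, fun s hs t ht _ => by rw [h s hs, h t ht],
    0, fun s hs _ => h s hs, Or.inr rfl⟩

/-- Main selection lemma at the top level, when a row of length `≤ r` exists. -/
lemma top_step_pos {ν : RP} {ρ r : ℕ} (hinv : INVT ρ ν) (hr : ρ ≤ r)
    (hex : ∃ s ∈ ν, s.1 ≤ r) :
    ∃ x : ℤ, x ≤ 0 ∧ (upLen ν r, x) ∈ ν ∧
      minRig (shiftGT r 1 ν) = x ∧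
      ¬(shiftGT r 1 ν = 0 ∨ 0 < minRig (shiftGT r 1 ν)) ∧
      selLen (shiftGT r 1 ν) = upLen ν r ∧
      INVT (r + 1) ((upLen ν r + 1, x - 1) ::ₘ
        shiftGT (upLen ν r) (-2) ((shiftGT r 1 ν).erase (upLen ν r, x))) := by
  obtain ⟨h0, h1, z, hz, hzd⟩ := hinv
  have hFne : ν.filter (fun s => s.1 = upLen ν r) ≠ 0 := by
    obtain ⟨x, hx⟩ := exists_upLen hex
    have : (upLen ν r, x) ∈ ν.filter (fun s => s.1 = upLen ν r) :=
      Multiset.mem_filter.mpr ⟨hx, rfl⟩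
    intro hc
    rw [hc] at this
    exact absurd this (Multiset.notMem_zero _)
  obtain ⟨sx, hsxF, hsx2⟩ := exists_minRig hFne
  obtain ⟨u', x⟩ := sx
  have hsxν : (u', x) ∈ ν := (Multiset.mem_filter.mp hsxF).1
  have hsx1 : u' = upLen ν r := (Multiset.mem_filter.mp hsxF).2
  subst hsx1
  have hux : (upLen ν r, x) ∈ ν := hsxν
  have hur : upLen ν r ≤ r := upLen_le_r ν r
  have hx0 : x ≤ 0 := h0 _ hsxν
  have hxall : ∀ t ∈ ν, t.1 ≤ r → x ≤ t.2 := by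
    intro t ht htr
    have htu : t.1 ≤ upLen ν r := le_upLen ht htr
    rcases eq_or_lt_of_le htu with heq | hlt
    · have h' := minRig_le hFne (Multiset.mem_filter.mpr ⟨ht, heq⟩)
      rw [← hsx2] at h'
      exact h'
    · exact h1 _ hux t ht hlt
  have hxz : x ≤ z := by
    rcases hzd with ⟨s₀, hs₀, hs₀ρ, hs₀z⟩ | hz0
    · exact (hxall s₀ hs₀ (by omega)).trans hs₀z
    · rw [hz0]; exact hx0
  have hlong : ∀ t ∈ ν, r < t.1 → t.2 = x := by
    intro t ht htr
    have ha : t.2 ≤ x := h1 t ht _ hux (by dsimp only; omega)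
    have hb : t.2 = z := hz t ht (by omega)
    omega
  have huxν' : (upLen ν r, x) ∈ shiftGT r 1 ν := mem_shiftGT_of_le hux hur
  have hν'ne : shiftGT r 1 ν ≠ 0 := fun h => by rw [h] at huxν'; exact absurd huxν' (Multiset.notMem_zero _)
  have hminν' : minRig (shiftGT r 1 ν) = x := by
    refine minRig_eq huxν' ?_
    intro t' ht'
    show x ≤ t'.2
    obtain ⟨t, ht, hcase⟩ := mem_shiftGT ht'
    rcases hcase with ⟨h2, h3⟩ | ⟨h2, h3⟩
    · rw [h3]; exact hxall t ht h2
    · have ht'2 : t'.2 = t.2 + 1 := by rw [h3]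
      have := hlong t ht h2
      omega
  have hselν' : selLen (shiftGT r 1 ν) = upLen ν r := by
    refine selLen_eq hminν' huxν' ?_
    intro t' ht' ht2
    obtain ⟨t, ht, hcase⟩ := mem_shiftGT ht'
    rcases hcase with ⟨h2, h3⟩ | ⟨h2, h3⟩
    · rw [h3]; exact le_upLen ht h2
    · exfalso
      have ht'2 : t'.2 = t.2 + 1 := by rw [h3]
      have := hlong t ht h2
      omega
  refine ⟨x, hx0, hux, hminν', ?_, hselν', ?_⟩
  · push_neg
    refine ⟨hν'ne, ?_⟩
    rw [hminν']
    exact hx0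
  have hchar : ∀ s ∈ (upLen ν r + 1, x - 1) ::ₘ
      shiftGT (upLen ν r) (-2) ((shiftGT r 1 ν).erase (upLen ν r, x)),
      s = (upLen ν r + 1, x - 1) ∨ (s ∈ ν ∧ s.1 ≤ upLen ν r ∧ x ≤ s.2 ∧ s.2 ≤ 0) ∨
      (r < s.1 ∧ s.2 = x - 1) := by
    intro s hs
    rw [Multiset.mem_cons] at hs
    rcases hs with rfl | hs
    · exact Or.inl rfl
    obtain ⟨t', ht', hcase⟩ := mem_shiftGT hs
    have ht'ν' : t' ∈ shiftGT r 1 ν := Multiset.mem_of_mem_erase ht'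
    obtain ⟨t, ht, hcase2⟩ := mem_shiftGT ht'ν'
    rcases hcase2 with ⟨h2, h2'⟩ | ⟨h2, h2'⟩
    · have htu : t.1 ≤ upLen ν r := le_upLen ht h2
      have ht'1 : t'.1 = t.1 := by rw [h2']
      rcases hcase with ⟨h3, h4⟩ | ⟨h3, h4⟩
      · right; left
        rw [h4, h2']
        exact ⟨ht, htu, hxall t ht h2, h0 t ht⟩
      · omega
    · have hx2 : t.2 = x := hlong t ht h2
      have ht'1 : t'.1 = t.1 := by rw [h2']
      have ht'2 : t'.2 = t.2 + 1 := by rw [h2']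
      rcases hcase with ⟨h3, h4⟩ | ⟨h3, h4⟩
      · omega
      · right; right
        have hs1 : s.1 = t'.1 := by rw [h4]
        have hs2 : s.2 = t'.2 + -2 := by rw [h4]
        constructor
        · omega
        · omega
  have hurx : ((upLen ν r + 1 : ℕ), x - 1).1 = upLen ν r + 1 := rfl
  have hurx2 : ((upLen ν r + 1 : ℕ), x - 1).2 = x - 1 := rfl
  refine ⟨?_, ?_, x - 1, ?_, ?_⟩
  · intro s hs
    rcases hchar s hs with heq | ⟨_, _, _, h⟩ | ⟨_, h⟩
    · have : s.2 = x - 1 := by rw [heq]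
      omega
    · exact h
    · omega
  · intro s hs t ht hlt
    rcases hchar s hs with hseq | ⟨hsν, hs1, hs2, hs3⟩ | ⟨hs1, hs2⟩ <;>
      rcases hchar t ht with hteq | ⟨htν, ht1, ht2, ht3⟩ | ⟨ht1, ht2⟩
    · rw [hseq, hteq] at hlt; omega
    · have e1 : s.1 = upLen ν r + 1 := by rw [hseq]
      have e2 : s.2 = x - 1 := by rw [hseq]
      omega
    · have e2 : s.2 = x - 1 := by rw [hseq]
      omega
    · have e1 : t.1 = upLen ν r + 1 := by rw [hteq]
      omega
    · exact h1 s hsν t htν hlt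
    · omega
    · have e1 : t.1 = upLen ν r + 1 := by rw [hteq]
      have e2 : t.2 = x - 1 := by rw [hteq]
      omega
    · omega
    · omega
  · intro s hs hlen
    rcases hchar s hs with heq | ⟨_, h, _, _⟩ | ⟨_, h⟩
    · rw [heq]
    · omega
    · exact h
  · left
    refine ⟨(upLen ν r + 1, x - 1), Multiset.mem_cons_self _ _, ?_, le_rfl⟩
    show upLen ν r + 1 ≤ r + 1
    omega

/-- Top selection lemma, branch-1 case: no row of length `≤ r`. -/
lemma top_step_neg {ν : RP} {ρ r : ℕ} (hinv : INVT ρ ν) (hr : ρ ≤ r)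
    (hpos : ∀ s ∈ ν, 1 ≤ s.1) (hnex : ¬ ∃ s ∈ ν, s.1 ≤ r) :
    (shiftGT r 1 ν = 0 ∨ 0 < minRig (shiftGT r 1 ν)) ∧
      INVT (r + 1) ((1, -1) ::ₘ shiftGT 0 (-2) (shiftGT r 1 ν)) ∧ upLen ν r = 0 := by
  obtain ⟨h0, h1, z, hz, hzd⟩ := hinv
  have hz0 : z = 0 := by
    rcases hzd with ⟨s₀, hs₀, hs₀ρ, _⟩ | h
    · exact absurd ⟨s₀, hs₀, by omega⟩ hnex
    · exact h
  have hall0 : ∀ s ∈ ν, s.2 = 0 := by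
    intro s hs
    have : r < s.1 := by by_contra hc; exact hnex ⟨s, hs, by omega⟩
    rw [hz s hs (by omega), hz0]
  have hchar : ∀ s ∈ (1, (-1:ℤ)) ::ₘ shiftGT 0 (-2) (shiftGT r 1 ν),
      s.2 = -1 ∧ (s.1 = 1 ∨ r < s.1) := by
    intro s hs
    rw [Multiset.mem_cons] at hs
    rcases hs with rfl | hs
    · exact ⟨rfl, Or.inl rfl⟩
    obtain ⟨t', ht', hcase⟩ := mem_shiftGT hs
    obtain ⟨t, ht, hcase2⟩ := mem_shiftGT ht'
    have htr : r < t.1 := by by_contra hc; exact hnex ⟨t, ht, by omega⟩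
    have ht2 : t.2 = 0 := hall0 t ht
    rcases hcase2 with ⟨h2, h3⟩ | ⟨h2, h3⟩
    · omega
    · have ht'1 : t'.1 = t.1 := by rw [h3]
      have ht'2 : t'.2 = t.2 + 1 := by rw [h3]
      have hpt : 1 ≤ t.1 := hpos t ht
      rcases hcase with ⟨h4, h5⟩ | ⟨h4, h5⟩
      · omega
      · have hs1 : s.1 = t'.1 := by rw [h5]
        have hs2 : s.2 = t'.2 + -2 := by rw [h5]
        constructor
        · omega
        · omega
  refine ⟨?_, ⟨?_, ?_, -1, ?_, ?_⟩, upLen_eq_zero hnex⟩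
  · rcases eq_or_ne ν 0 with rfl | h
    · left; rfl
    · right
      obtain ⟨s₀, hs₀⟩ := Multiset.exists_mem_of_ne_zero h
      have hlong : r < s₀.1 := by by_contra hc; exact hnex ⟨s₀, hs₀, by omega⟩
      have hmem : (s₀.1, s₀.2 + 1) ∈ shiftGT r 1 ν := mem_shiftGT_of_lt hs₀ hlong
      have hmr : minRig (shiftGT r 1 ν) = s₀.2 + 1 := by
        refine minRig_eq hmem ?_
        intro t' ht'
        obtain ⟨t, ht, hcase⟩ := mem_shiftGT ht'
        rcases hcase with ⟨h2, h3⟩ | ⟨h2, h3⟩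
        · exact absurd ⟨t, ht, by omega⟩ hnex
        · have ht'2 : t'.2 = t.2 + 1 := by rw [h3]
          have := hall0 t ht
          have := hall0 s₀ hs₀
          show s₀.2 + 1 ≤ t'.2
          omega
      rw [hmr, hall0 s₀ hs₀]
      norm_num
  · intro s hs
    rw [(hchar s hs).1]
    norm_num
  · intro s hs t ht _
    rw [(hchar s hs).1, (hchar t ht).1]
  · intro s hs _
    exact (hchar s hs).1
  · left
    exact ⟨(1, -1), Multiset.mem_cons_self _ _, by constructor <;> dsimp only <;> omega⟩


/-! ### more helpers -/

lemma upLen_shiftGT (t : ℕ) (d : ℤ) (ν : RP) (r : ℕ) :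
    upLen (shiftGT t d ν) r = upLen ν r := by
  rw [upLen, upLen, shiftGT, Multiset.filter_map, Multiset.map_map]
  have h1 : ∀ s ∈ ν, ((fun s : ℕ × ℤ => s.1 ≤ r) ∘ fun s => if t < s.1 then (s.1, s.2 + d) else s) s
      ↔ (fun s : ℕ × ℤ => s.1 ≤ r) s := by
    intro s _
    simp only [Function.comp]
    split <;> simp
  rw [Multiset.filter_congr h1]
  congr 1
  apply Multiset.map_congr rfl
  intro s _
  simp only [Function.comp]
  split <;> simp

lemma exists_le_shiftGT {t : ℕ} {d : ℤ} {ν : RP} {r : ℕ} :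
    (∃ s ∈ shiftGT t d ν, s.1 ≤ r) ↔ (∃ s ∈ ν, s.1 ≤ r) := by
  constructor
  · rintro ⟨s, hs, hr⟩
    obtain ⟨u, hu, hcase⟩ := mem_shiftGT hs
    rcases hcase with ⟨h1, h2⟩ | ⟨h1, h2⟩
    · exact ⟨u, hu, by rw [h2] at hr; exact hr⟩
    · refine ⟨u, hu, ?_⟩
      have : s.1 = u.1 := by rw [h2]
      omega
  · rintro ⟨s, hs, hr⟩
    by_cases h : t < s.1
    · exact ⟨(s.1, s.2 + d), mem_shiftGT_of_lt hs h, hr⟩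
    · exact ⟨s, mem_shiftGT_of_le hs (by omega), hr⟩

lemma colHt_two {ν : RP} {s : ℕ × ℤ} (hs : s ∈ ν) {c c' : ℕ} (h : c ≤ s.1) (h' : s.1 < c') :
    colHt ν c' + 1 ≤ colHt ν c := by
  rw [colHt_erase hs c, colHt_erase hs c', if_pos h, if_neg (by omega)]
  have : colHt (ν.erase s) c' ≤ colHt (ν.erase s) c := colHt_anti (by omega)
  omega

/-! ### global state predicates -/

def Basic (R : RC) : Prop := R 0 = 0 ∧ ∀ b, ∀ s ∈ R b, 1 ≤ s.1

def RigZero (R : RC) (m : ℕ) : Prop := ∀ j, 1 ≤ j → j + 1 ≤ m → ∀ s ∈ R j, s.2 = 0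

def Ilace (R : RC) (m : ℕ) : Prop := ∀ l, 1 ≤ l → l + 1 ≤ m → ∀ c, 1 ≤ c →
  colHt (R (l + 1)) c ≤ colHt (R l) c + 1 ∧ colHt (R l) c ≤ colHt (R (l + 1)) c

lemma basic_fOp {a : ℕ} {R : RC} (ha : 1 ≤ a) (hB : Basic R) : Basic (fOp a R) := by
  constructor
  · have h0 : (0:ℕ) ≠ a := by omega
    by_cases hb : R a = 0 ∨ 0 < minRig (R a)
    · rw [fOp_b1 hb, if_neg h0, hB.1, zero_add, shiftGT, Multiset.map_zero]
    · rw [fOp_b2 hb, if_neg h0, if_neg h0, hB.1, zero_add, shiftGT, Multiset.map_zero]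
  · intro b s hs
    by_cases hb : R a = 0 ∨ 0 < minRig (R a) <;>
      [rw [fOp_b1 hb] at hs; rw [fOp_b2 hb] at hs] <;>
      rw [Multiset.mem_add] at hs
    · rcases hs with hs | hs
      · split at hs
        · rw [Multiset.mem_singleton] at hs; rw [hs]
        · exact absurd hs (Multiset.notMem_zero s)
      · obtain ⟨u, hu, hcase⟩ := mem_shiftGT hs
        have h1 : s.1 = u.1 := by rcases hcase with ⟨_, rfl⟩ | ⟨_, h⟩; rfl; rw [h]
        rw [h1]; exact hB.2 b u hu
    · rcases hs with hs | hs
      · split at hs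
        · rw [Multiset.mem_singleton] at hs; rw [hs]; exact Nat.le_add_left 1 _
        · exact absurd hs (Multiset.notMem_zero s)
      · obtain ⟨u, hu, hcase⟩ := mem_shiftGT hs
        have h1 : s.1 = u.1 := by rcases hcase with ⟨_, rfl⟩ | ⟨_, h⟩; rfl; rw [h]
        rw [h1]
        split at hu
        · exact hB.2 a u (Multiset.mem_of_mem_erase hu)
        · exact hB.2 b u hu

lemma basic_fList {γ : List ℕ} (hγ : ∀ x ∈ γ, 1 ≤ x) {R : RC} (hB : Basic R) :
    Basic (fList γ R) := by
  induction γ generalizing R with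
  | nil => exact hB
  | cons x γ ih =>
    rw [fList, List.foldl_cons]
    exact ih (fun y hy => hγ y (List.mem_cons_of_mem x hy)) (basic_fOp (hγ x (List.mem_cons_self)) hB)

/-! ### list plumbing -/

lemma fList_append (γ δ : List ℕ) (R : RC) : fList (γ ++ δ) R = fList δ (fList γ R) := by
  rw [fList, fList, fList, List.foldl_append]

lemma fList_concat (γ : List ℕ) (x : ℕ) (R : RC) : fList (γ ++ [x]) R = fOp x (fList γ R) := by
  rw [fList_append]; rfl

lemma lowerInt_self (a : ℕ) : lowerInt a a = [a] := by
  rw [lowerInt]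
  have : a + 1 - a = 1 := by omega
  rw [this]
  rfl

lemma lowerInt_concat {a l : ℕ} (h : a ≤ l + 1) : lowerInt a (l + 1) = lowerInt a l ++ [l + 1] := by
  rw [lowerInt, lowerInt]
  have h1 : l + 1 + 1 - a = (l + 1 - a) + 1 := by omega
  rw [h1, List.range'_1_concat]
  congr 2
  omega

/-! ### the snake -/

noncomputable def snakeU (R : RC) (a : ℕ) : ℕ → ℕ := fun l =>
  Nat.rec (maxLen (R a)) (fun t ih => upLen (R (a + t + 1)) ih) (l - a)

lemma snakeU_a (R : RC) (a : ℕ) : snakeU R a a = maxLen (R a) := by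
  simp [snakeU]

lemma snakeU_succ (R : RC) {a l : ℕ} (h : a ≤ l) :
    snakeU R a (l + 1) = upLen (R (l + 1)) (snakeU R a l) := by
  have h1 : l + 1 - a = (l - a) + 1 := by omega
  have h2 : a + (l - a) + 1 = l + 1 := by omega
  rw [snakeU]
  simp only [h1]
  rw [h2]
  rfl

lemma snakeU_antitone (R : RC) {a l l' : ℕ} (h : a ≤ l) (h2 : l ≤ l') :
    snakeU R a l' ≤ snakeU R a l := by
  induction l' with
  | zero => have : l = 0 := by omega
            rw [this]
  | succ n ih =>
    rcases Nat.lt_or_ge l (n + 1) with hl | hl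
    · have han : a ≤ n := by omega
      calc snakeU R a (n + 1) = upLen (R (n + 1)) (snakeU R a n) := snakeU_succ R han
        _ ≤ snakeU R a n := upLen_le_r _ _
        _ ≤ snakeU R a l := ih (by omega)
    · have : l = n + 1 := by omega
      rw [this]


/-! ### the gap lemma -/

lemma gap_lemma {νl νl1 Sl : RP} {ul : ℕ}
    (hIl : ∀ c, 1 ≤ c → colHt νl1 c ≤ colHt νl c + 1 ∧ colHt νl c ≤ colHt νl1 c)
    (hhts : ∀ c, 1 ≤ c → colHt Sl c = colHt νl c + (if c = ul + 1 then 1 else 0))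
    {s : ℕ × ℤ} (hs : s ∈ Sl) (hpos : 1 ≤ s.1) (hle : s.1 ≤ ul)
    (hgt : upLen νl1 ul < s.1) : False := by
  have h1 : colHt Sl (ul + 1) + 1 ≤ colHt Sl s.1 := colHt_two hs le_rfl (by omega)
  have h2 : colHt Sl s.1 = colHt νl s.1 := by
    rw [hhts s.1 hpos, if_neg (by omega), add_zero]
  have h3 : colHt Sl (ul + 1) = colHt νl (ul + 1) + 1 := by
    rw [hhts (ul + 1) (by omega), if_pos rfl]
  have h4 : colHt νl s.1 ≤ colHt νl1 s.1 := (hIl s.1 hpos).2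
  have h5 : colHt νl1 s.1 = colHt νl1 (ul + 1) := colHt_gap hgt (by omega)
  have h6 : colHt νl1 (ul + 1) ≤ colHt νl (ul + 1) + 1 := (hIl (ul + 1) (by omega)).1
  omega

/-! ### inner description of the snake -/

structure ID (R S : RC) (a l : ℕ) (u : ℕ → ℕ) : Prop where
  low  : ∀ b, b < a → S b = R b
  high : ∀ b, l + 1 < b → S b = R b
  next : S (l + 1) = shiftGT (u l) 1 (R (l + 1))
  ht   : ∀ j, a ≤ j → j ≤ l → ∀ c, 1 ≤ c →
           colHt (S j) c = colHt (R j) c + (if c = u j + 1 then 1 else 0)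
  mid  : ∀ j, a ≤ j → j < l → (∀ s ∈ S j, s.2 = 0) ∧ ((u j + 1, (0:ℤ)) ∈ S j)
  cur  : (∀ s ∈ S l, (s.1 ≤ u l ∧ s.2 = 0) ∨ (u l < s.1 ∧ s.2 = -1)) ∧
           ((u l + 1, (-1:ℤ)) ∈ S l)

lemma mem_lowerInt_ge {x a m : ℕ} (h : x ∈ lowerInt a m) : a ≤ x := by
  rw [lowerInt, List.mem_range'_1] at h
  exact h.1

theorem inner_snake {R : RC} {a m : ℕ} (ha : 1 ≤ a)
    (hB : Basic R) (hZ : RigZero R m) (hI : Ilace R m) :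
    ∀ t, a + t < m → ID R (fList (lowerInt a (a + t)) R) a (a + t) (snakeU R a) := by
  intro t
  induction t with
  | zero =>
    intro htm
    rw [Nat.add_zero] at htm ⊢
    have hS : fList (lowerInt a a) R = fOp a R := by
      rw [lowerInt_self]; rfl
    rw [hS]
    have hua : snakeU R a a = maxLen (R a) := snakeU_a R a
    have hZa : ∀ s ∈ R a, s.2 = 0 := hZ a ha (by omega)
    have hlow : ∀ b, b + 1 = a → ∀ s ∈ R b, s.1 ≤ maxLen (R a) := by
      intro b hb s hs
      by_contra hc
      have h1 : 1 ≤ colHt (R b) (maxLen (R a) + 1) := one_le_colHt hs (by omega)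
      rcases Nat.lt_or_ge b 1 with hb1 | hb1
      · have : b = 0 := by omega
        rw [this, hB.1] at hs
        exact absurd hs (Multiset.notMem_zero s)
      · have h2 := (hI b hb1 (by omega) (maxLen (R a) + 1) (by omega)).2
        rw [hb] at h2
        rw [colHt_maxLen_succ] at h2
        omega
    have hselOf : selOf a R = maxLen (R a) := by
      rcases eq_or_ne (R a) 0 with hRa | hRa
      · rw [selOf, if_pos (Or.inl hRa), hRa]
        show 0 = maxLen 0
        rw [maxLen]
        simp
      · obtain ⟨x, hx⟩ := exists_maxLen hRa
        have ⟨hnbr, hmin, hsel, _, _⟩ := sel_pattern_pos (hB.2 a)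
          (fun s hs => Or.inl ⟨le_maxLen hs, hZa s hs⟩) ⟨(maxLen (R a), x), hx, le_rfl⟩
        rw [selOf, if_neg hnbr, hsel, upLen_maxLen hRa]
    constructor
    · -- low
      intro b hb
      rcases Nat.lt_or_ge (b + 1) a with h1 | h1
      · exact fOp_far R (Or.inl h1)
      · have hba : a = b + 1 := by omega
        rw [fOp_adj R (Or.inr hba), hselOf]
        exact shiftGT_of_forall_le (hlow b hba.symm)
    · -- high
      intro b hb
      exact fOp_far R (Or.inr hb)
    · -- next
      rw [fOp_adj R (Or.inl rfl), hselOf, hua]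
    · -- ht
      intro j hj1 hj2 c hc
      have hj : j = a := by omega
      subst hj
      rcases eq_or_ne (R j) 0 with hRa | hRa
      · have hmax0 : maxLen (R j) = 0 := by rw [hRa, maxLen]; simp
        rw [fOp_self_b1 (Or.inl hRa), colHt_cons]
        have e0 : colHt (shiftGT 0 (-2) (R j)) c = colHt (R j) c := colHt_shiftGT _ _ _ _
        rw [e0]
        have e1 : colHt (R j) c = 0 := by rw [hRa]; rfl
        have e2 : ((1:ℕ), (-1:ℤ)).1 = 1 := rfl
        rw [e1, e2, hua, hmax0]
        split_ifs <;> omega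
      · obtain ⟨x, hx⟩ := exists_maxLen hRa
        have hx0 : x = 0 := hZa _ hx
        subst hx0
        have ⟨hnbr, hmin, hsel, _, _⟩ := sel_pattern_pos (hB.2 j)
          (fun s hs => Or.inl ⟨le_maxLen hs, hZa s hs⟩) ⟨(maxLen (R j), 0), hx, le_rfl⟩
        have hsel' : selLen (R j) = maxLen (R j) := by rw [hsel, upLen_maxLen hRa]
        rw [fOp_self_b2 hnbr, hsel', hmin, colHt_cons, colHt_shiftGT]
        have herase := colHt_erase hx c
        rw [hua]
        have h1 : ((maxLen (R j) + 1 : ℕ), (0:ℤ) - 1).1 = maxLen (R j) + 1 := rfl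
        rw [h1]
        split_ifs at herase ⊢ <;> omega
    · -- mid
      intro j hj1 hj2
      omega
    · -- cur
      constructor
      · intro s hs
        rcases eq_or_ne (R a) 0 with hRa | hRa
        · rw [fOp_self_b1 (Or.inl hRa), hRa] at hs
          rw [shiftGT, Multiset.map_zero, Multiset.mem_cons] at hs
          rcases hs with rfl | hs
          · right
            refine ⟨?_, rfl⟩
            show snakeU R a a < 1
            have hmax0 : maxLen (R a) = 0 := by rw [hRa, maxLen]; simp
            rw [hua, hmax0]
            omega
          · exact absurd hs (Multiset.notMem_zero s)
        · obtain ⟨x, hx⟩ := exists_maxLen hRa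
          have hx0 : x = 0 := hZa _ hx
          subst hx0
          have ⟨hnbr, hmin, hsel, _, _⟩ := sel_pattern_pos (hB.2 a)
            (fun s hs => Or.inl ⟨le_maxLen hs, hZa s hs⟩) ⟨(maxLen (R a), 0), hx, le_rfl⟩
          have hsel' : selLen (R a) = maxLen (R a) := by rw [hsel, upLen_maxLen hRa]
          rw [fOp_self_b2 hnbr, hsel', hmin, Multiset.mem_cons] at hs
          rcases hs with rfl | hs
          · right
            constructor
            · show snakeU R a a < maxLen (R a) + 1
              rw [hua]; omega
            · show (0:ℤ) - 1 = -1; norm_num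
          · obtain ⟨t, ht, hcase⟩ := mem_shiftGT hs
            have htR : t ∈ R a := Multiset.mem_of_mem_erase ht
            have htle : t.1 ≤ maxLen (R a) := le_maxLen htR
            rcases hcase with ⟨h1, h2⟩ | ⟨h1, h2⟩
            · left
              rw [h2, hua]
              exact ⟨htle, hZa t htR⟩
            · omega
      · rcases eq_or_ne (R a) 0 with hRa | hRa
        · rw [fOp_self_b1 (Or.inl hRa), hua, hRa]
          have : maxLen (0 : RP) = 0 := by rw [maxLen]; simp
          rw [this]
          exact Multiset.mem_cons_self _ _
        · obtain ⟨x, hx⟩ := exists_maxLen hRa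
          have hx0 : x = 0 := hZa _ hx
          subst hx0
          have ⟨hnbr, hmin, hsel, _, _⟩ := sel_pattern_pos (hB.2 a)
            (fun s hs => Or.inl ⟨le_maxLen hs, hZa s hs⟩) ⟨(maxLen (R a), 0), hx, le_rfl⟩
          have hsel' : selLen (R a) = maxLen (R a) := by rw [hsel, upLen_maxLen hRa]
          rw [fOp_self_b2 hnbr, hsel', hmin, hua]
          have : ((0:ℤ) - 1) = -1 := by norm_num
          rw [this]
          exact Multiset.mem_cons_self _ _
  | succ t iht =>
    intro htm
    have hidx : a + (t + 1) = (a + t) + 1 := by omega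
    rw [hidx]
    set l := a + t with hl
    have hIH := iht (by omega)
    set S := fList (lowerInt a l) R with hSdef
    have hS' : fList (lowerInt a (l + 1)) R = fOp (l + 1) S := by
      rw [lowerInt_concat (by omega), fList_concat]
    rw [hS']
    set u := snakeU R a with hu
    have hal : a ≤ l := by omega
    have hl1 : 1 ≤ l := by omega
    have hBS : Basic S := basic_fList (fun x hx => le_trans ha (mem_lowerInt_ge hx)) hB
    have hZl1 : ∀ s ∈ R (l + 1), s.2 = 0 := hZ (l + 1) (by omega) (by omega)
    have hSl1 : S (l + 1) = shiftGT (u l) 1 (R (l + 1)) := hIH.next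
    have hu1 : u (l + 1) = upLen (R (l + 1)) (u l) := snakeU_succ R hal
    have hupS : upLen (S (l + 1)) (u l) = u (l + 1) := by
      rw [hSl1, upLen_shiftGT, hu1]
    have hu_le : u (l + 1) ≤ u l := by rw [hu1]; exact upLen_le_r _ _
    have hpat : ∀ s ∈ S (l + 1), (s.1 ≤ u l ∧ s.2 = 0) ∨ (u l < s.1 ∧ s.2 = 1) := by
      intro s hs
      rw [hSl1] at hs
      obtain ⟨w, hw, hcase⟩ := mem_shiftGT hs
      rcases hcase with ⟨h1, h2⟩ | ⟨h1, h2⟩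
      · left
        rw [h2]
        exact ⟨h1, hZl1 w hw⟩
      · right
        have e1 : s.1 = w.1 := by rw [h2]
        have e2 : s.2 = w.2 + 1 := by rw [h2]
        have := hZl1 w hw
        constructor <;> omega
    have hposS1 : ∀ s ∈ S (l + 1), 1 ≤ s.1 := hBS.2 (l + 1)
    have hgap : ∀ s ∈ S l, s.2 = 0 → s.1 ≤ u (l + 1) := by
      intro s hs h0
      by_contra hc
      have hcur := hIH.cur.1 s hs
      have hle : s.1 ≤ u l := by
        rcases hcur with ⟨h1, _⟩ | ⟨_, h2⟩
        · exact h1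
        · omega
      refine gap_lemma (fun c hc => hI l hl1 (by omega) c hc) (hIH.ht l hal le_rfl)
        hs (hBS.2 l s hs) hle ?_
      rw [← hu1]
      omega
    by_cases hex : ∃ s ∈ S (l + 1), s.1 ≤ u l
    · -- branch 2 at level l+1
      obtain ⟨hnbr, hmin, hsel, hmem, hpos1⟩ := sel_pattern_pos hposS1 hpat hex
      have hsel' : selLen (S (l + 1)) = u (l + 1) := by rw [hsel, hupS]
      have hmem' : (u (l + 1), (0:ℤ)) ∈ S (l + 1) := by rw [← hupS]; exact hmem
      have hselOf : selOf (l + 1) S = u (l + 1) := by rw [selOf, if_neg hnbr, hsel']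
      have hself : fOp (l + 1) S (l + 1) = (u (l + 1) + 1, (0:ℤ) - 1) ::ₘ
          shiftGT (u (l + 1)) (-2) ((S (l + 1)).erase (u (l + 1), 0)) := by
        rw [fOp_self_b2 hnbr, hsel', hmin]
      constructor
      · intro b hb
        rw [fOp_far S (Or.inl (by omega))]
        exact hIH.low b hb
      · intro b hb
        rw [fOp_far S (Or.inr (by omega))]
        exact hIH.high b (by omega)
      · rw [fOp_adj S (Or.inl rfl), hselOf, hIH.high (l + 1 + 1) (by omega)]
      · intro j hj1 hj2 c hc
        rcases Nat.lt_or_ge j l with hjl | hjl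
        · rw [fOp_far S (Or.inl (by omega))]
          exact hIH.ht j hj1 (by omega) c hc
        rcases Nat.lt_or_ge j (l + 1) with hjl1 | hjl1
        · have hjeq : j = l := by omega
          subst hjeq
          rw [fOp_adj S (Or.inr rfl), colHt_shiftGT]
          exact hIH.ht l hj1 le_rfl c hc
        · have hjeq : j = l + 1 := by omega
          subst hjeq
          rw [hself, colHt_cons, colHt_shiftGT]
          have herase := colHt_erase hmem' c
          have hhtR : colHt (S (l + 1)) c = colHt (R (l + 1)) c := by rw [hSl1, colHt_shiftGT]
          rw [hhtR] at herase
          have h1 : ((u (l + 1) + 1 : ℕ), (0:ℤ) - 1).1 = u (l + 1) + 1 := rfl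
          rw [h1]
          have h2 : (u (l + 1), (0:ℤ)).1 = u (l + 1) := rfl
          rw [h2] at herase
          split_ifs at herase ⊢ <;> omega
      · intro j hj1 hj2
        rcases Nat.lt_or_ge j l with hjl | hjl
        · rw [fOp_far S (Or.inl (by omega))]
          exact hIH.mid j hj1 hjl
        · have hjeq : j = l := by omega
          subst hjeq
          rw [fOp_adj S (Or.inr rfl), hselOf]
          constructor
          · intro s hs
            obtain ⟨w, hw, hcase⟩ := mem_shiftGT hs
            rcases hcase with ⟨h1, h2⟩ | ⟨h1, h2⟩
            · rcases hIH.cur.1 w hw with ⟨h3, h4⟩ | ⟨h3, h4⟩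
              · rw [h2]; exact h4
              · exfalso; omega
            · rcases hIH.cur.1 w hw with ⟨h3, h4⟩ | ⟨h3, h4⟩
              · exact absurd (hgap w hw h4) (by omega)
              · have e2 : s.2 = w.2 + 1 := by rw [h2]
                omega
          · have hmemc := hIH.cur.2
            have hmm := mem_shiftGT_of_lt (d := 1) hmemc (show u (l + 1) < (u l + 1, (-1:ℤ)).1 from by show u (l + 1) < u l + 1; omega)
            have he : ((-1:ℤ) + 1) = 0 := by norm_num
            rw [he] at hmm
            exact hmm
      · constructor
        · intro s hs
          rw [hself, Multiset.mem_cons] at hs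
          rcases hs with rfl | hs
          · right
            refine ⟨show u (l+1) < u (l+1) + 1 from by omega, show (0:ℤ) - 1 = -1 from by norm_num⟩
          · obtain ⟨w, hw, hcase⟩ := mem_shiftGT hs
            have hwS : w ∈ S (l + 1) := Multiset.mem_of_mem_erase hw
            rcases hpat w hwS with ⟨h3, h4⟩ | ⟨h3, h4⟩
            · have hwu : w.1 ≤ u (l + 1) := by
                rw [← hupS]
                exact le_upLen hwS h3
              rcases hcase with ⟨h1, h2⟩ | ⟨h1, h2⟩
              · left
                rw [h2]
                exact ⟨hwu, h4⟩
              · omega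
            · rcases hcase with ⟨h1, h2⟩ | ⟨h1, h2⟩
              · omega
              · right
                have e1 : s.1 = w.1 := by rw [h2]
                have e2 : s.2 = w.2 + -2 := by rw [h2]
                constructor <;> omega
        · rw [hself]
          have he : ((0:ℤ) - 1) = -1 := by norm_num
          rw [he]
          exact Multiset.mem_cons_self _ _
    · -- branch 1 at level l+1
      obtain ⟨hbr, hup0S⟩ := sel_pattern_neg hpat hex
      have hu10 : u (l + 1) = 0 := by rw [← hupS, hup0S]
      have hselOf : selOf (l + 1) S = 0 := by rw [selOf, if_pos hbr]
      have hself : fOp (l + 1) S (l + 1) = (1, (-1:ℤ)) ::ₘ shiftGT 0 (-2) (S (l + 1)) :=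
        fOp_self_b1 hbr
      constructor
      · intro b hb
        rw [fOp_far S (Or.inl (by omega))]
        exact hIH.low b hb
      · intro b hb
        rw [fOp_far S (Or.inr (by omega))]
        exact hIH.high b (by omega)
      · rw [fOp_adj S (Or.inl rfl), hselOf, hIH.high (l + 1 + 1) (by omega), hu10]
      · intro j hj1 hj2 c hc
        rcases Nat.lt_or_ge j l with hjl | hjl
        · rw [fOp_far S (Or.inl (by omega))]
          exact hIH.ht j hj1 (by omega) c hc
        rcases Nat.lt_or_ge j (l + 1) with hjl1 | hjl1
        · have hjeq : j = l := by omega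
          subst hjeq
          rw [fOp_adj S (Or.inr rfl), colHt_shiftGT]
          exact hIH.ht l hj1 le_rfl c hc
        · have hjeq : j = l + 1 := by omega
          subst hjeq
          rw [hself, colHt_cons, colHt_shiftGT]
          have hhtR : colHt (S (l + 1)) c = colHt (R (l + 1)) c := by rw [hSl1, colHt_shiftGT]
          rw [hhtR, hu10]
          have h1 : ((1 : ℕ), (-1:ℤ)).1 = 1 := rfl
          rw [h1]
          split_ifs <;> omega
      · intro j hj1 hj2
        rcases Nat.lt_or_ge j l with hjl | hjl
        · rw [fOp_far S (Or.inl (by omega))]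
          exact hIH.mid j hj1 hjl
        · have hjeq : j = l := by omega
          subst hjeq
          rw [fOp_adj S (Or.inr rfl), hselOf]
          constructor
          · intro s hs
            obtain ⟨w, hw, hcase⟩ := mem_shiftGT hs
            have hwpos : 1 ≤ w.1 := hBS.2 l w hw
            rcases hcase with ⟨h1, h2⟩ | ⟨h1, h2⟩
            · omega
            · rcases hIH.cur.1 w hw with ⟨h3, h4⟩ | ⟨h3, h4⟩
              · exact absurd (hgap w hw h4) (by omega)
              · have e2 : s.2 = w.2 + 1 := by rw [h2]
                omega
          · have hmemc := hIH.cur.2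
            have hmm := mem_shiftGT_of_lt (d := 1) hmemc (show (0:ℕ) < (u l + 1, (-1:ℤ)).1 from by show 0 < u l + 1; omega)
            have he : ((-1:ℤ) + 1) = 0 := by norm_num
            rw [he] at hmm
            exact hmm
      · constructor
        · intro s hs
          rw [hself, Multiset.mem_cons] at hs
          rcases hs with rfl | hs
          · right
            rw [hu10]
            exact ⟨show (0:ℕ) < 1 from by omega, rfl⟩
          · obtain ⟨w, hw, hcase⟩ := mem_shiftGT hs
            rcases hpat w hw with ⟨h3, h4⟩ | ⟨h3, h4⟩
            · exact absurd ⟨w, hw, h3⟩ hex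
            · have hwpos : 1 ≤ w.1 := hposS1 w hw
              rcases hcase with ⟨h1, h2⟩ | ⟨h1, h2⟩
              · omega
              · right
                have e1 : s.1 = w.1 := by rw [h2]
                have e2 : s.2 = w.2 + -2 := by rw [h2]
                constructor <;> omega
        · rw [hself, hu10]
          exact Multiset.mem_cons_self _ _


/-! ### more helpers for the main step -/

lemma upLen_pos_attained {ν : RP} {r : ℕ} (h : 1 ≤ upLen ν r) : ∃ x, (upLen ν r, x) ∈ ν := by
  apply exists_upLen
  by_contra hc
  rw [upLen_eq_zero hc] at h
  omega

lemma maxLen_pos_attained {ν : RP} (h : 1 ≤ maxLen ν) : ∃ x, (maxLen ν, x) ∈ ν := by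
  apply exists_maxLen
  intro hc
  rw [hc, maxLen] at h
  simp at h

lemma snakeU_attained {R : RC} {a l : ℕ} (hal : a ≤ l) (hpos : 1 ≤ snakeU R a l) :
    ∃ x, (snakeU R a l, x) ∈ R l := by
  rcases eq_or_lt_of_le hal with rfl | hlt
  · rw [snakeU_a] at hpos ⊢
    exact maxLen_pos_attained hpos
  · obtain ⟨l', rfl⟩ : ∃ l', l = l' + 1 := ⟨l - 1, by omega⟩
    rw [snakeU_succ R (by omega)] at hpos ⊢
    exact upLen_pos_attained hpos

lemma upLen_eq_maxLen {ν : RP} {r : ℕ} (h : maxLen ν ≤ r) : upLen ν r = maxLen ν := by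
  rcases eq_or_ne ν 0 with rfl | hne
  · rw [upLen, maxLen]; simp
  · obtain ⟨x, hx⟩ := exists_maxLen hne
    exact le_antisymm (Multiset.sup_le.mpr (fun b hb => by
      rw [Multiset.mem_map] at hb
      obtain ⟨s, hs, rfl⟩ := hb
      exact le_maxLen (Multiset.mem_filter.mp hs).1)) (le_upLen hx h)

/-- lower bound for the new snake from the stored old snake -/
lemma snake_lb {R : RC} {a M : ℕ} {sk : ℕ → ℕ} (haM : a ≤ M)
    (hrows : ∀ l, a ≤ l → l + 1 ≤ M + 1 → ∃ x, ((sk l) + 1, x) ∈ R l)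
    (hdec : ∀ l l', a ≤ l → l ≤ l' → l' + 1 ≤ M + 1 → sk l' ≤ sk l) :
    ∀ l, a ≤ l → l ≤ M → sk l + 1 ≤ snakeU R a l := by
  intro l hal
  induction l, hal using Nat.le_induction with
  | base =>
    intro _
    obtain ⟨x, hx⟩ := hrows a le_rfl (by omega)
    rw [snakeU_a]
    exact le_maxLen hx
  | succ l hal ih =>
    intro hlM
    obtain ⟨x, hx⟩ := hrows (l + 1) (by omega) (by omega)
    rw [snakeU_succ R hal]
    refine le_upLen hx ?_
    have h1 : sk (l + 1) ≤ sk l := hdec l (l + 1) hal (by omega) (by omega)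
    have h2 : sk l + 1 ≤ snakeU R a l := ih (by omega)
    omega

/-- interlacing is preserved when boxes are added along the snake -/
lemma ilace_update {νl νl1 : RP} {ul ul1 : ℕ} (hul1 : ul1 = upLen νl1 ul)
    (hIl : ∀ c, 1 ≤ c → colHt νl1 c ≤ colHt νl c + 1 ∧ colHt νl c ≤ colHt νl1 c)
    (hrow : ul1 < ul → ∃ x, (ul, x) ∈ νl)
    (c : ℕ) (hc : 1 ≤ c) :
    colHt νl1 c + (if c = ul1 + 1 then 1 else 0) ≤
        (colHt νl c + (if c = ul + 1 then 1 else 0)) + 1 ∧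
      colHt νl c + (if c = ul + 1 then 1 else 0) ≤
        colHt νl1 c + (if c = ul1 + 1 then 1 else 0) := by
  have hle : ul1 ≤ ul := by rw [hul1]; exact upLen_le_r _ _
  rcases eq_or_lt_of_le hle with heq | hlt
  · subst heq
    have := hIl c hc
    split_ifs <;> omega
  · obtain ⟨x, hx⟩ := hrow hlt
    have hpos : 1 ≤ ul := by omega
    have hA : colHt νl (ul + 1) + 1 ≤ colHt νl ul := by
      have := colHt_lt_of_mem hx
      simpa using this
    have hB : colHt νl ul ≤ colHt νl1 ul := (hIl ul hpos).2
    have hC : colHt νl1 ul = colHt νl1 (ul + 1) := colHt_gap (by omega) (by omega)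
    have hD : colHt νl1 (ul1 + 1) = colHt νl1 (ul + 1) := colHt_gap (by omega) (by omega)
    have hE : colHt νl1 (ul + 1) ≤ colHt νl (ul + 1) + 1 := (hIl (ul + 1) (by omega)).1
    have hF : colHt νl ul ≤ colHt νl (ul1 + 1) := colHt_anti (by omega)
    constructor
    · rcases eq_or_ne c (ul1 + 1) with rfl | hne
      · rw [if_pos rfl, if_neg (by omega)]
        omega
      · have h1 := (hIl c hc).1
        split_ifs <;> omega
    · rcases eq_or_ne c (ul + 1) with rfl | hne
      · rw [if_pos rfl, if_neg (by omega)]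
        omega
      · have h1 := (hIl c hc).2
        split_ifs <;> omega

/-! ### the global invariant -/

def TopOk (a₀ m : ℕ) (R : RC) : Prop :=
  ∃ ρ, INVT ρ (R m) ∧ ∀ a, a₀ ≤ a → a + 1 ≤ m →
    (ρ = 0 ∨ ∃ sk : ℕ → ℕ, (∀ l, a ≤ l → l + 1 ≤ m → ∃ x, ((sk l) + 1, x) ∈ R l) ∧
      (∀ l l', a ≤ l → l ≤ l' → l' + 1 ≤ m → sk l' ≤ sk l) ∧ ρ ≤ sk (m - 1) + 1)

def Inv (p : ℕ × ℕ) (R : RC) : Prop :=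
  Basic R ∧ RigZero R p.2 ∧ Ilace R p.2 ∧ TopOk p.1 p.2 R


/-- Common final assembly of the invariant after the last operator `f_m` of an
interval `(a, m) = (a, M+1)` with `a ≤ M`. -/
lemma assemble {R : RC} {a M : ℕ} (ha : 1 ≤ a) (haM : a ≤ M)
    (hB : Basic R) (hZ : RigZero R (M + 1)) (hI : Ilace R (M + 1))
    (hBS : Basic (fList (lowerInt a M) R))
    (hID : ID R (fList (lowerInt a M) R) a M (snakeU R a))
    (hSnext : (fList (lowerInt a M) R) (M + 1) = shiftGT (snakeU R a M) 1 (R (M + 1)))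
    (hu1 : snakeU R a (M + 1) = upLen (R (M + 1)) (snakeU R a M))
    (hu_le : snakeU R a (M + 1) ≤ snakeU R a M)
    (hgapM : ∀ s ∈ (fList (lowerInt a M) R) M, s.2 = 0 → s.1 ≤ snakeU R a (M + 1))
    (hselOf : selOf (M + 1) (fList (lowerInt a M) R) = snakeU R a (M + 1))
    (hinvS : INVT (snakeU R a M + 1) (fOp (M + 1) (fList (lowerInt a M) R) (M + 1)))
    (hcolm : ∀ c, 1 ≤ c → colHt (fOp (M + 1) (fList (lowerInt a M) R) (M + 1)) c
      = colHt (R (M + 1)) c + (if c = snakeU R a (M + 1) + 1 then 1 else 0)) :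
    Inv (a, M + 1) (fOp (M + 1) (fList (lowerInt a M) R)) := by
  set u := snakeU R a with hu
  set S := fList (lowerInt a M) R with hSdef
  have hfar_low : ∀ b, b < M → fOp (M + 1) S b = S b := by
    intro b hb
    exact fOp_far S (Or.inl (by omega))
  have hlevM : fOp (M + 1) S M = shiftGT (u (M + 1)) 1 (S M) := by
    rw [fOp_adj S (Or.inr rfl), hselOf]
  have hSbR : ∀ b, b < a → fOp (M + 1) S b = R b := by
    intro b hb
    rw [hfar_low b (by omega)]
    exact hID.low b hb
  have hmidRig : ∀ s ∈ fOp (M + 1) S M, s.2 = 0 := by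
    intro s hs
    rw [hlevM] at hs
    obtain ⟨w, hw, hcase⟩ := mem_shiftGT hs
    rcases hcase with ⟨h1, h2⟩ | ⟨h1, h2⟩
    · rcases hID.cur.1 w hw with ⟨h3, h4⟩ | ⟨h3, h4⟩
      · rw [h2]; exact h4
      · exfalso; omega
    · rcases hID.cur.1 w hw with ⟨h3, h4⟩ | ⟨h3, h4⟩
      · exact absurd (hgapM w hw h4) (by omega)
      · have e2 : s.2 = w.2 + 1 := by rw [h2]
        omega
  have hmemM : (u M + 1, (0:ℤ)) ∈ fOp (M + 1) S M := by
    rw [hlevM]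
    have hmm := mem_shiftGT_of_lt (d := 1) hID.cur.2
      (show u (M + 1) < (u M + 1, (-1:ℤ)).1 from by show u (M + 1) < u M + 1; omega)
    have he : ((-1:ℤ) + 1) = 0 := by norm_num
    rw [he] at hmm
    exact hmm
  -- uniform column height description on [a, M+1]
  have hcolAll : ∀ j, a ≤ j → j ≤ M + 1 → ∀ c, 1 ≤ c →
      colHt (fOp (M + 1) S j) c = colHt (R j) c + (if c = u j + 1 then 1 else 0) := by
    intro j hj1 hj2 c hc
    rcases Nat.lt_or_ge j M with hjM | hjM
    · rw [hfar_low j hjM]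
      exact hID.ht j hj1 (by omega) c hc
    rcases Nat.lt_or_ge j (M + 1) with hjM1 | hjM1
    · have : j = M := by omega
      subst this
      rw [hlevM, colHt_shiftGT]
      exact hID.ht j hj1 le_rfl c hc
    · have : j = M + 1 := by omega
      subst this
      exact hcolm c hc
  refine ⟨basic_fOp (by omega) hBS, ?_, ?_, ?_⟩
  · -- RigZero
    intro j hj1 hj2 s hs
    rcases Nat.lt_or_ge j a with hja | hja
    · rw [hSbR j hja] at hs
      exact hZ j hj1 hj2 s hs
    rcases Nat.lt_or_ge j M with hjM | hjM
    · rw [hfar_low j hjM] at hs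
      exact (hID.mid j hja hjM).1 s hs
    · have : j = M := by omega
      subst this
      exact hmidRig s hs
  · -- Ilace
    intro l hl1 hl2 c hc
    rcases Nat.lt_or_ge (l + 1) a with h1 | h1
    · rw [hSbR l (by omega), hSbR (l + 1) (by omega)]
      exact hI l hl1 hl2 c hc
    rcases Nat.lt_or_ge l a with h2 | h2
    · -- l + 1 = a
      have hla : l + 1 = a := by omega
      rw [hSbR l (by omega), hla, hcolAll a le_rfl (by omega) c hc]
      have hold := hI l hl1 (by omega) c hc
      rw [hla] at hold
      have hua : u a = maxLen (R a) := snakeU_a R a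
      constructor
      · rcases eq_or_ne c (u a + 1) with rfl | hne
        · rw [if_pos rfl]
          have h0 : colHt (R a) (u a + 1) = 0 := by
            rw [hua]
            exact colHt_maxLen_succ _
          omega
        · rw [if_neg hne]
          omega
      · split_ifs <;> omega
    · -- a ≤ l ≤ M : both levels got a box
      rw [hcolAll l h2 (by omega) c hc, hcolAll (l + 1) (by omega) (by omega) c hc]
      have hul1 : u (l + 1) = upLen (R (l + 1)) (u l) := snakeU_succ R h2
      have hrow : u (l + 1) < u l → ∃ x, (u l, x) ∈ R l := by
        intro hlt
        have h1l : 1 ≤ snakeU R a l := by rw [← hu]; omega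
        exact snakeU_attained h2 h1l
      have := ilace_update hul1 (fun c' hc' => hI l hl1 (by omega) c' hc') hrow c hc
      exact ⟨this.1, this.2⟩
  · -- TopOk
    refine ⟨u M + 1, hinvS, ?_⟩
    intro a' ha1 ha2
    right
    refine ⟨u, ?_, ?_, ?_⟩
    · intro l hl1 hl2
      rcases Nat.lt_or_ge l M with hlM | hlM
      · rw [hfar_low l hlM]
        exact ⟨0, (hID.mid l (by omega) hlM).2⟩
      · have : l = M := by omega
        subst this
        exact ⟨0, hmemM⟩
    · intro l l' hl1 hl2 hl3
      exact snakeU_antitone R (by omega) hl2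
    · have : M + 1 - 1 = M := by omega
      rw [this]
/-! ### the main step lemma: applying one lower interval -/

theorem step_main {R : RC} {a m : ℕ} (ha : 1 ≤ a) (ham : a ≤ m)
    (hB : Basic R) (hZ : RigZero R m) (hI : Ilace R m) (hT : TopOk a m R) :
    Inv (a, m) (fList (lowerInt a m) R) := by
  obtain ⟨ρ, hinv, hsk⟩ := hT
  have hBall : Basic (fList (lowerInt a m) R) :=
    basic_fList (fun x hx => le_trans ha (mem_lowerInt_ge hx)) hB
  rcases eq_or_lt_of_le ham with rfl | haltm
  · -- CASE a = m : a single operator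
    have hS : fList (lowerInt a a) R = fOp a R := by rw [lowerInt_self]; rfl
    set r := max ρ (maxLen (R a)) with hr
    have hshift : shiftGT r 1 (R a) = R a :=
      shiftGT_of_forall_le (fun s hs => le_trans (le_maxLen hs) (le_max_right _ _))
    have hlow : ∀ b, b + 1 = a → ∀ s ∈ R b, s.1 ≤ maxLen (R a) := by
      intro b hb s hs
      by_contra hc
      have h1 : 1 ≤ colHt (R b) (maxLen (R a) + 1) := one_le_colHt hs (by omega)
      rcases Nat.lt_or_ge b 1 with hb1 | hb1
      · have : b = 0 := by omega
        rw [this, hB.1] at hs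
        exact absurd hs (Multiset.notMem_zero s)
      · have h2 := (hI b hb1 (by omega) (maxLen (R a) + 1) (by omega)).2
        rw [hb] at h2
        rw [colHt_maxLen_succ] at h2
        omega
    -- S' (a-1) = R (a-1) and in fact S' b = R b for all b < a
    have hlowS : ∀ b, b < a → fOp a R b = R b := by
      intro b hb
      rcases Nat.lt_or_ge (b + 1) a with h1 | h1
      · exact fOp_far R (Or.inl h1)
      · have hba : a = b + 1 := by omega
        rw [fOp_adj R (Or.inr hba)]
        rcases eq_or_ne (R a) 0 with hRa | hRa
        · have hsel0 : selOf a R = 0 := by rw [selOf, if_pos (Or.inl hRa)]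
          rw [hsel0]
          refine shiftGT_of_forall_le ?_
          intro s hs
          have := hlow b hba.symm s hs
          have hmax0 : maxLen (R a) = 0 := by rw [hRa, maxLen]; simp
          omega
        · have hex : ∃ s ∈ R a, s.1 ≤ r := by
            obtain ⟨s₀, hs₀⟩ := Multiset.exists_mem_of_ne_zero hRa
            exact ⟨s₀, hs₀, le_trans (le_maxLen hs₀) (le_max_right _ _)⟩
          obtain ⟨x, hx0, hux, hmin', hnbr', hsel', hinv'⟩ :=
            top_step_pos hinv (le_max_left _ _) hex
          rw [hshift] at hmin' hnbr' hsel'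
          have hupmax : upLen (R a) r = maxLen (R a) := upLen_eq_maxLen (le_max_right _ _)
          rw [selOf, if_neg hnbr', hsel', hupmax]
          exact shiftGT_of_forall_le (hlow b hba.symm)
    -- the new top multiset and its column heights
    have hcolm : ∀ c, 1 ≤ c →
        colHt (fOp a R a) c = colHt (R a) c + (if c = maxLen (R a) + 1 then 1 else 0) := by
      intro c hc
      rcases eq_or_ne (R a) 0 with hRa | hRa
      · have hmax0 : maxLen (R a) = 0 := by rw [hRa, maxLen]; simp
        rw [fOp_self_b1 (Or.inl hRa), colHt_cons, colHt_shiftGT, hmax0]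
        have e2 : ((1:ℕ), (-1:ℤ)).1 = 1 := rfl
        rw [e2]
        split_ifs <;> omega
      · have hex : ∃ s ∈ R a, s.1 ≤ r := by
          obtain ⟨s₀, hs₀⟩ := Multiset.exists_mem_of_ne_zero hRa
          exact ⟨s₀, hs₀, le_trans (le_maxLen hs₀) (le_max_right _ _)⟩
        obtain ⟨x, hx0, hux, hmin', hnbr', hsel', hinv'⟩ :=
          top_step_pos hinv (le_max_left _ _) hex
        rw [hshift] at hmin' hnbr' hsel'
        have hupmax : upLen (R a) r = maxLen (R a) := upLen_eq_maxLen (le_max_right _ _)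
        rw [hupmax] at hux hsel'
        rw [fOp_self_b2 hnbr', hsel', hmin', colHt_cons, colHt_shiftGT]
        have herase := colHt_erase hux c
        have e1 : ((maxLen (R a) + 1 : ℕ), x - 1).1 = maxLen (R a) + 1 := rfl
        have e2 : ((maxLen (R a) : ℕ), x).1 = maxLen (R a) := rfl
        rw [e1]
        rw [e2] at herase
        split_ifs at herase ⊢ <;> omega
    rw [hS]
    refine ⟨by rw [← hS]; exact hBall, ?_, ?_, ?_⟩
    · -- RigZero
      intro j hj1 hj2 s hs
      rw [hlowS j (by omega)] at hs
      exact hZ j hj1 hj2 s hs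
    · -- Ilace
      intro l hl1 hl2 c hc
      rcases Nat.lt_or_ge (l + 1) a with h1 | h1
      · rw [hlowS l (by omega), hlowS (l + 1) (by omega)]
        exact hI l hl1 hl2 c hc
      · have hla : l + 1 = a := by omega
        rw [hlowS l (by omega), hla, hcolm c hc]
        have hold := hI l hl1 (by omega) c hc
        rw [hla] at hold
        constructor
        · rcases eq_or_ne c (maxLen (R a) + 1) with rfl | hne
          · rw [if_pos rfl]
            have h0 : colHt (R a) (maxLen (R a) + 1) = 0 := colHt_maxLen_succ _
            omega
          · rw [if_neg hne]
            omega
        · split_ifs <;> omega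
    · -- TopOk
      rcases eq_or_ne (R a) 0 with hRa | hRa
      · have hnex : ¬ ∃ s ∈ R a, s.1 ≤ r := by
          rw [hRa]
          rintro ⟨s, hs, -⟩
          exact absurd hs (Multiset.notMem_zero s)
        obtain ⟨hbr', hinv', -⟩ := top_step_neg hinv (le_max_left _ _) (hB.2 a) hnex
        rw [hshift] at hbr' hinv'
        refine ⟨r + 1, ?_, ?_⟩
        · rw [fOp_self_b1 hbr']
          exact hinv'
        · intro a' ha1 ha2
          omega
      · have hex : ∃ s ∈ R a, s.1 ≤ r := by
          obtain ⟨s₀, hs₀⟩ := Multiset.exists_mem_of_ne_zero hRa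
          exact ⟨s₀, hs₀, le_trans (le_maxLen hs₀) (le_max_right _ _)⟩
        obtain ⟨x, hx0, hux, hmin', hnbr', hsel', hinv'⟩ :=
          top_step_pos hinv (le_max_left _ _) hex
        rw [hshift] at hmin' hnbr' hsel' hinv'
        refine ⟨r + 1, ?_, ?_⟩
        · rw [fOp_self_b2 hnbr', hsel', hmin']
          exact hinv'
        · intro a' ha1 ha2
          exact absurd ha2 (by omega)
  · -- CASE a < m
    obtain ⟨M, rfl⟩ : ∃ M, m = M + 1 := ⟨m - 1, by omega⟩
    have haM : a ≤ M := by omega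
    set u := snakeU R a with hu
    have hID : ID R (fList (lowerInt a M) R) a M u := by
      have h1 : a + (M - a) = M := by omega
      have := inner_snake ha hB hZ hI (M - a) (by omega)
      rw [h1] at this
      exact this
    set S := fList (lowerInt a M) R with hSdef
    have hS' : fList (lowerInt a (M + 1)) R = fOp (M + 1) S := by
      rw [lowerInt_concat (by omega), fList_concat]
    rw [hS']
    have hBS : Basic S := basic_fList (fun x hx => le_trans ha (mem_lowerInt_ge hx)) hB
    have hSnext : S (M + 1) = shiftGT (u M) 1 (R (M + 1)) := hID.next
    have hu1 : u (M + 1) = upLen (R (M + 1)) (u M) := snakeU_succ R haM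
    have hrρ : ρ ≤ u M := by
      rcases hsk a le_rfl (by omega) with h0 | ⟨sk, hrows, hdec, hρs⟩
      · omega
      · have hlb := snake_lb haM (fun l h1 h2 => hrows l h1 (by omega))
          (fun l l' h1 h2 h3 => hdec l l' h1 h2 (by omega)) M haM le_rfl
        have hM1 : M + 1 - 1 = M := by omega
        rw [hM1] at hρs
        have hfin : sk M + 1 ≤ u M := by rw [hu]; exact hlb
        omega
    have hu_le : u (M + 1) ≤ u M := by rw [hu1]; exact upLen_le_r _ _
    have hgapM : ∀ s ∈ S M, s.2 = 0 → s.1 ≤ u (M + 1) := by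
      intro s hs h0
      by_contra hc
      have hcur := hID.cur.1 s hs
      have hle : s.1 ≤ u M := by
        rcases hcur with ⟨h1, _⟩ | ⟨_, h2⟩
        · exact h1
        · omega
      refine gap_lemma (fun c hcc => hI M (by omega) (by omega) c hcc) (hID.ht M haM le_rfl)
        hs (hBS.2 M s hs) hle ?_
      rw [← hu1]
      omega
    -- branch analysis at the top level
    by_cases hex : ∃ s ∈ R (M + 1), s.1 ≤ u M
    case pos =>
      obtain ⟨x, hx0, hux, hmin', hnbr', hsel', hinv'⟩ := top_step_pos hinv hrρ hex
      rw [← hSnext] at hmin' hnbr' hsel' hinv'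
      have hselu : selLen (S (M + 1)) = u (M + 1) := by rw [hsel', hu1]
      have hselOf : selOf (M + 1) S = u (M + 1) := by rw [selOf, if_neg hnbr', hselu]
      have hmemS : (u (M + 1), x) ∈ S (M + 1) := by
        rw [hSnext, hu1]
        exact mem_shiftGT_of_le hux (upLen_le_r _ _)
      have hself : fOp (M + 1) S (M + 1) = (u (M + 1) + 1, x - 1) ::ₘ
          shiftGT (u (M + 1)) (-2) ((S (M + 1)).erase (u (M + 1), x)) := by
        rw [fOp_self_b2 hnbr', hselu, hmin']
      have hinvS : INVT (u M + 1) (fOp (M + 1) S (M + 1)) := by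
        rw [hself, hu1]
        exact hinv'
      -- column heights of the new top
      have hcolm : ∀ c, 1 ≤ c → colHt (fOp (M + 1) S (M + 1)) c
          = colHt (R (M + 1)) c + (if c = u (M + 1) + 1 then 1 else 0) := by
        intro c hc
        rw [hself, colHt_cons, colHt_shiftGT]
        have herase := colHt_erase hmemS c
        have hR : colHt (S (M + 1)) c = colHt (R (M + 1)) c := by rw [hSnext, colHt_shiftGT]
        rw [hR] at herase
        have e1 : ((u (M + 1) + 1 : ℕ), x - 1).1 = u (M + 1) + 1 := rfl
        have e2 : ((u (M + 1) : ℕ), x).1 = u (M + 1) := rfl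
        rw [e1]
        rw [e2] at herase
        split_ifs at herase ⊢ <;> omega
      exact assemble ha haM hB hZ hI hBS hID hSnext hu1 hu_le hgapM hselOf hinvS hcolm
    case neg =>
      have hnexS : ¬ ∃ s ∈ S (M + 1), s.1 ≤ u M := by
        rw [hSnext]
        rw [exists_le_shiftGT]
        exact hex
      obtain ⟨hbr', hinv', hup0⟩ := top_step_neg hinv hrρ (hB.2 (M + 1)) hex
      rw [← hSnext] at hbr' hinv'
      have hu10 : u (M + 1) = 0 := by rw [hu1, hup0]
      have hselOf : selOf (M + 1) S = u (M + 1) := by rw [selOf, if_pos hbr', hu10]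
      have hself : fOp (M + 1) S (M + 1) = (1, (-1:ℤ)) ::ₘ shiftGT 0 (-2) (S (M + 1)) :=
        fOp_self_b1 hbr'
      have hinvS : INVT (u M + 1) (fOp (M + 1) S (M + 1)) := by
        rw [hself]
        exact hinv'
      have hcolm : ∀ c, 1 ≤ c → colHt (fOp (M + 1) S (M + 1)) c
          = colHt (R (M + 1)) c + (if c = u (M + 1) + 1 then 1 else 0) := by
        intro c hc
        rw [hself, colHt_cons, colHt_shiftGT]
        have hR : colHt (S (M + 1)) c = colHt (R (M + 1)) c := by rw [hSnext, colHt_shiftGT]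
        rw [hR, hu10]
        have e1 : ((1:ℕ), (-1:ℤ)).1 = 1 := rfl
        rw [e1]
        split_ifs <;> omega
      exact assemble ha haM hB hZ hI hBS hID hSnext hu1 hu_le hgapM hselOf hinvS hcolm


/-! ### chaining the invariant along the decomposition -/

lemma Basic_empty : Basic emptyRC :=
  ⟨rfl, fun _ s hs => absurd hs (Multiset.notMem_zero s)⟩

lemma colHt_empty (j c : ℕ) : colHt (emptyRC j) c = 0 := by
  simp [emptyRC, colHt]

lemma Inv_start {q : ℕ × ℕ} (h1 : 1 ≤ q.1) (h2 : q.1 ≤ q.2) :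
    Inv q (fList (lowerInt q.1 q.2) emptyRC) := by
  obtain ⟨a, m⟩ := q
  refine step_main h1 h2 Basic_empty ?_ ?_ ?_
  · intro j _ _ s hs
    exact absurd hs (Multiset.notMem_zero s)
  · intro l _ _ c _
    rw [colHt_empty, colHt_empty]
    omega
  · exact ⟨0, INVT_of_rig_zero (fun s hs => absurd hs (Multiset.notMem_zero s)),
      fun _ _ _ => Or.inl rfl⟩

lemma Inv_next {R : RC} {p q : ℕ × ℕ} (hInv : Inv p R) (hq1 : 1 ≤ q.1) (hq2 : q.1 ≤ q.2)
    (hch : CascCh p q) : Inv q (fList (lowerInt q.1 q.2) R) := by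
  obtain ⟨hB, hZ, hI, hT⟩ := hInv
  obtain ⟨a, m⟩ := q
  have hm : m ≤ p.2 := by
    rcases hch with h | ⟨h, _⟩ <;> omega
  refine step_main hq1 hq2 hB ?_ ?_ ?_
  · intro j hj1 hj2 s hs
    exact hZ j hj1 (by omega) s hs
  · intro l hl1 hl2 c hc
    exact hI l hl1 (by omega) c hc
  · rcases hch with hlt | ⟨heq, hle⟩
    · refine ⟨0, INVT_of_rig_zero (fun s hs => hZ m (by simp at hq1 hq2; omega)
        (by simp at hlt; omega) s hs), fun _ _ _ => Or.inl rfl⟩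
    · simp only at heq hle
      subst heq
      obtain ⟨ρ, hinv, h⟩ := hT
      exact ⟨ρ, hinv, fun a' ha' h2 => h a' (le_trans hle ha') h2⟩

lemma seqOf_append (xs ys : List (ℕ × ℕ)) : seqOf (xs ++ ys) = seqOf xs ++ seqOf ys := by
  rw [seqOf, seqOf, seqOf, List.map_append, List.flatten_append]

lemma Rk_succ (ivs : List (ℕ × ℕ)) (k : ℕ) (hk : k < ivs.length) :
    Rk ivs (k + 1) = fList (lowerInt (ivs[k]'hk).1 (ivs[k]'hk).2) (Rk ivs k) := by
  rw [Rk, Rk, RCseq, RCseq, List.take_succ, List.getElem?_eq_getElem hk]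
  rw [seqOf_append, fList_append]
  congr 1
  rw [seqOf]
  simp

lemma chain_rel {ivs : List (ℕ × ℕ)} (hch : List.Chain' CascCh ivs) {k : ℕ}
    (hk : k + 1 < ivs.length) :
    CascCh (ivs[k]'(by omega)) (ivs[k + 1]'hk) := by
  replace hch := List.isChain_iff_getElem.mp hch
  have := hch k (by omega)
  simpa [List.get_eq_getElem] using this

theorem inv_prefix {n : ℕ} {ivs : List (ℕ × ℕ)} (hc : IsCascDecomp n ivs) :
    ∀ k (hk : k < ivs.length), Inv (ivs[k]'hk) (Rk ivs (k + 1)) := by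
  intro k
  induction k with
  | zero =>
    intro hk
    rw [Rk_succ ivs 0 hk]
    have hiv := hc.1 _ (ivs.getElem_mem hk)
    have h0 : Rk ivs 0 = emptyRC := rfl
    rw [h0]
    exact Inv_start hiv.1 hiv.2.1
  | succ k ih =>
    intro hk
    rw [Rk_succ ivs (k + 1) hk]
    have hiv := hc.1 _ (ivs.getElem_mem hk)
    exact Inv_next (ih (by omega)) hiv.1 hiv.2.1 (chain_rel hc.2 hk)


/-- part of the Main Lemma.
Let `α` be a cascading `n`-sequence with decomposition `I_1, …, I_P`, let
`I = I_{k+1} = (a, …, m)` (0-based index `k`), and `R_I = R_k = (μ₁, …, μ_n)`.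
Then every string of `μ₁, …, μ_{m-1}` has rigging `0`, and for `1 ≤ l ≤ m-1` the
underlying partitions satisfy `overline(μ_{l+1}) ⊆ μ_l ⊆ μ_{l+1}` (expressed via
column heights: removing the top row lowers each column height by one). -/
theorem mainLemma_zero_riggings_and_sandwich (n : ℕ) (hn : 0 < n)
    (ivs : List (ℕ × ℕ)) (hc : IsCascDecomp n ivs)
    (k : ℕ) (hk : k < ivs.length) (a m : ℕ) (hiv : ivs[k]'hk = (a, m)) :
    (∀ j, 1 ≤ j → j ≤ m - 1 → ∀ s ∈ Rk ivs k j, s.2 = 0) ∧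
    (∀ l, 1 ≤ l → l ≤ m - 1 →
      (∀ c, 1 ≤ c → colHt (Rk ivs k (l + 1)) c - 1 ≤ colHt (Rk ivs k l) c) ∧
      (∀ c, 1 ≤ c → colHt (Rk ivs k l) c ≤ colHt (Rk ivs k (l + 1)) c)) := by
  have hlv : IsLowerIv n (ivs[k]'hk) := hc.1 _ (ivs.getElem_mem hk)
  rw [hiv] at hlv
  obtain ⟨h1, h2, h3⟩ := hlv
  have ham : 1 ≤ m := le_trans h1 h2
  rcases Nat.eq_zero_or_pos k with rfl | hk0
  · have h0 : Rk ivs 0 = emptyRC := rfl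
    rw [h0]
    constructor
    · intro j _ _ s hs
      exact absurd hs (Multiset.notMem_zero s)
    · intro l _ _
      constructor <;> intro c _ <;> rw [colHt_empty, colHt_empty]
  · obtain ⟨k', rfl⟩ : ∃ k', k = k' + 1 := ⟨k - 1, by omega⟩
    have hk' : k' < ivs.length := by omega
    have hInv := inv_prefix hc k' hk'
    have hch : CascCh (ivs[k']'hk') (ivs[k' + 1]'hk) := chain_rel hc.2 hk
    rw [hiv] at hch
    obtain ⟨hB, hZ, hI, -⟩ := hInv
    have hm2 : m ≤ (ivs[k']'hk').2 := by
      rcases hch with h | ⟨h, _⟩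
      · have : m < (ivs[k']'hk').2 := h
        omega
      · have : m = (ivs[k']'hk').2 := h
        omega
    constructor
    · intro j hj1 hj2 s hs
      exact hZ j hj1 (by omega) s hs
    · intro l hl1 hl2
      constructor
      · intro c hc'
        have := (hI l hl1 (by omega) c hc').1
        omega
      · intro c hc'
        exact (hI l hl1 (by omega) c hc').2

end CascRC
end
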